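/- arXiv:1511.08698 — 3 statements merged into one kernel-verified Lean document; each statement's English description precedes it below -/
import Mathlib

section
/- Let f* ∈ F(R*) attain the supremum in M_n(R*) = sup_{f∈F(R*)} ⟨ε, f-f⁰⟩/n, where R* is the unique maximizer of H_n over [R_min, ∞). Then τ(f*) = R*. -/
open MeasureTheory ProbabilityTheory Real Set

/-- Empirical norm: `‖f‖ₙ = sqrt((1/n) ∑ᵢ f(xᵢ)²)`, functions identified with
vectors of their values at the design points. -/
noncomputable def normN (n : ℕ) (f : Fin n → ℝ) : ℝ :=
  Real.sqrt ((∑ i, (f i) ^ 2) / n)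

/-- Euclidean inner product of the vectors of values at the design points. -/
noncomputable def innerN (n : ℕ) (u v : Fin n → ℝ) : ℝ := ∑ i, u i * v i

/-- The trade-off functional `τ(f) = sqrt(‖f-f⁰‖ₙ² + λ² I(f)²)`. -/
noncomputable def tauF (n : ℕ) (I : Seminorm ℝ (Fin n → ℝ)) (lam : ℝ)
    (f0 f : Fin n → ℝ) : ℝ :=
  Real.sqrt ((normN n (f - f0)) ^ 2 + lam ^ 2 * (I f) ^ 2)

/-- `M_n(R) = sup_{f : τ(f) ≤ R} ⟨ε, f - f⁰⟩ / n`. -/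
noncomputable def Mn (n : ℕ) (I : Seminorm ℝ (Fin n → ℝ)) (lam : ℝ)
    (f0 eps : Fin n → ℝ) (R : ℝ) : ℝ :=
  sSup {v : ℝ | ∃ f : Fin n → ℝ, tauF n I lam f0 f ≤ R ∧ v = innerN n eps (f - f0) / n}

/-- `H_n(R) = M_n(R) - R²/2`. -/
noncomputable def Hn (n : ℕ) (I : Seminorm ℝ (Fin n → ℝ)) (lam : ℝ)
    (f0 eps : Fin n → ℝ) (R : ℝ) : ℝ :=
  Mn n I lam f0 eps R - R ^ 2 / 2

/-- if `f*` attains the supremum in `M_n(R*)`, where `R*` is the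
unique maximizer of `H_n` on `[R_min, ∞)`, then `τ(f*) = R*`. -/
theorem tau_fstar_eq_Rstar (n : ℕ) (hn : 0 < n) (I : Seminorm ℝ (Fin n → ℝ)) (lam : ℝ)
    (hlam : 0 < lam) (f0 eps : Fin n → ℝ) (Rmin : ℝ)
    (hRmin : ∀ f : Fin n → ℝ, Rmin ≤ tauF n I lam f0 f)
    (Rstar : ℝ) (hRstarMem : Rstar ∈ Set.Ici Rmin)
    (hRstarMax : IsMaxOn (fun R => Hn n I lam f0 eps R) (Set.Ici Rmin) Rstar)
    (hRstarUniq : ∀ R ∈ Set.Ici Rmin,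
      IsMaxOn (fun R' => Hn n I lam f0 eps R') (Set.Ici Rmin) R → R = Rstar)
    (fstar : Fin n → ℝ) (hfstarMem : tauF n I lam f0 fstar ≤ Rstar)
    (hfstarSup : innerN n eps (fstar - f0) / n = Mn n I lam f0 eps Rstar) :
    tauF n I lam f0 fstar = Rstar := by
  set Rt := tauF n I lam f0 fstar with hRtdef
  have hRt0 : 0 ≤ Rt := Real.sqrt_nonneg _
  have hRtmin : Rmin ≤ Rt := hRmin fstar
  have hsub : {v : ℝ | ∃ f : Fin n → ℝ, tauF n I lam f0 f ≤ Rt ∧ v = innerN n eps (f - f0) / n}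
      ⊆ {v : ℝ | ∃ f : Fin n → ℝ, tauF n I lam f0 f ≤ Rstar ∧ v = innerN n eps (f - f0) / n} := by
    rintro v ⟨f, hf, hv⟩
    exact ⟨f, hf.trans hfstarMem, hv⟩
  have hMn : Mn n I lam f0 eps Rstar ≤ Mn n I lam f0 eps Rt := by
    by_cases hb : BddAbove {v : ℝ | ∃ f : Fin n → ℝ, tauF n I lam f0 f ≤ Rt ∧
        v = innerN n eps (f - f0) / n}
    · rw [← hfstarSup]
      exact le_csSup hb ⟨fstar, le_refl _, rfl⟩
    · have hb' : ¬ BddAbove {v : ℝ | ∃ f : Fin n → ℝ, tauF n I lam f0 f ≤ Rstar ∧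
          v = innerN n eps (f - f0) / n} := fun h => hb (h.mono hsub)
      unfold Mn
      rw [Real.sSup_of_not_bddAbove hb, Real.sSup_of_not_bddAbove hb']
  have hHn : Hn n I lam f0 eps Rstar ≤ Hn n I lam f0 eps Rt := by
    unfold Hn
    nlinarith [hMn, hfstarMem, hRt0]
  have hmax : IsMaxOn (fun R' => Hn n I lam f0 eps R') (Set.Ici Rmin) Rt :=
    fun R hR => le_trans (hRstarMax hR) hHn
  exact hRstarUniq Rt hRtmin hmax
end

section
/- If the penalized least squares estimator f̂ = argmin_{f∈F} {‖Y − f‖ₙ² + λ²I(f)²} is unique, then τ(f̂) = R*, where R* is the maximizer of H_n over [R_min, ∞). -/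
open MeasureTheory ProbabilityTheory Real Set

lemma sq_normN (n : ℕ) (g : Fin n → ℝ) :
    (normN n g) ^ 2 = (∑ i, (g i) ^ 2) / n := by
  rw [normN, Real.sq_sqrt]; positivity

lemma sq_tauF (n : ℕ) (I : Seminorm ℝ (Fin n → ℝ)) (lam : ℝ) (f0 f : Fin n → ℝ) :
    (tauF n I lam f0 f) ^ 2 = (normN n (f - f0)) ^ 2 + lam ^ 2 * (I f) ^ 2 := by
  rw [tauF, Real.sq_sqrt]; positivity

lemma tauF_nonneg (n : ℕ) (I : Seminorm ℝ (Fin n → ℝ)) (lam : ℝ) (f0 f : Fin n → ℝ) :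
    0 ≤ tauF n I lam f0 f := Real.sqrt_nonneg _

lemma normN_le_tauF (n : ℕ) (I : Seminorm ℝ (Fin n → ℝ)) (lam : ℝ) (f0 f : Fin n → ℝ) :
    normN n (f - f0) ≤ tauF n I lam f0 f := by
  have h1 : (normN n (f - f0)) ^ 2 ≤ (tauF n I lam f0 f) ^ 2 := by
    rw [sq_tauF]; nlinarith [sq_nonneg (lam * I f), sq_nonneg lam, (I f) ^ 2, sq_nonneg (I f)]
  have h0 : (0:ℝ) ≤ normN n (f - f0) := Real.sqrt_nonneg _
  nlinarith [tauF_nonneg n I lam f0 f]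

lemma bddAbove_MnSet (n : ℕ) (I : Seminorm ℝ (Fin n → ℝ)) (lam : ℝ)
    (f0 eps : Fin n → ℝ) (R : ℝ) :
    BddAbove {v : ℝ | ∃ f : Fin n → ℝ, tauF n I lam f0 f ≤ R ∧
      v = innerN n eps (f - f0) / n} := by
  refine ⟨Real.sqrt (∑ i, (eps i)^2) * Real.sqrt ((n:ℝ) * R^2) / n, ?_⟩
  rintro v ⟨f, hf, rfl⟩
  have hR0 : (0:ℝ) ≤ R := le_trans (tauF_nonneg n I lam f0 f) hf
  have hcs : innerN n eps (f - f0) ≤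
      Real.sqrt (∑ i, (eps i)^2) * Real.sqrt (∑ i, ((f - f0) i)^2) :=
    Real.sum_mul_le_sqrt_mul_sqrt _ _ _
  have hsum : (∑ i, ((f - f0) i)^2) ≤ (n:ℝ) * R^2 := by
    have h1 : normN n (f - f0) ≤ R := le_trans (normN_le_tauF n I lam f0 f) hf
    have h2 : (∑ i, ((f - f0) i)^2) / n ≤ R^2 := by
      have h0 : (0:ℝ) ≤ normN n (f - f0) := Real.sqrt_nonneg _
      have hsq := sq_normN n (f - f0)
      nlinarith
    rcases Nat.eq_zero_or_pos n with h | h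
    · subst h; simp
    · have hn' : (0:ℝ) < n := by exact_mod_cast h
      calc (∑ i, ((f - f0) i)^2) = ((∑ i, ((f - f0) i)^2) / n) * n := by field_simp
        _ ≤ R^2 * n := by apply mul_le_mul_of_nonneg_right h2 (le_of_lt hn')
        _ = (n:ℝ) * R^2 := by ring
  have : innerN n eps (f - f0) ≤ Real.sqrt (∑ i, (eps i)^2) * Real.sqrt ((n:ℝ) * R^2) :=
    le_trans hcs (by
      apply mul_le_mul_of_nonneg_left (Real.sqrt_le_sqrt hsum) (Real.sqrt_nonneg _))
  rcases Nat.eq_zero_or_pos n with h | h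
  · subst h; simp [innerN]
  · have hn' : (0:ℝ) < n := by exact_mod_cast h
    exact (div_le_div_iff_of_pos_right hn').2 this

lemma obj_eq (n : ℕ) (I : Seminorm ℝ (Fin n → ℝ)) (lam : ℝ)
    (f0 eps f : Fin n → ℝ) :
    (normN n ((f0 + eps) - f)) ^ 2 + lam ^ 2 * (I f) ^ 2 =
      (tauF n I lam f0 f) ^ 2 - 2 * (innerN n eps (f - f0) / n) + (∑ i, (eps i)^2) / n := by
  rw [sq_tauF, sq_normN, sq_normN, innerN]
  have h : ∀ i : Fin n, ((f0 + eps) - f) i ^ 2 =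
      (eps i)^2 - 2 * (eps i * (f - f0) i) + ((f - f0) i)^2 := by
    intro i; simp only [Pi.add_apply, Pi.sub_apply]; ring
  rw [Finset.sum_congr rfl (fun i _ => h i), Finset.sum_add_distrib,
    Finset.sum_sub_distrib, ← Finset.mul_sum]
  rcases Nat.eq_zero_or_pos n with h0 | h0
  · subst h0; simp
  · have hn' : ((n:ℝ)) ≠ 0 := by positivity
    field_simp
    ring

lemma mem_MnSet (n : ℕ) (I : Seminorm ℝ (Fin n → ℝ)) (lam : ℝ)
    (f0 eps f : Fin n → ℝ) (R : ℝ) (hf : tauF n I lam f0 f ≤ R) :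
    innerN n eps (f - f0) / n ≤ Mn n I lam f0 eps R :=
  le_csSup (bddAbove_MnSet n I lam f0 eps R) ⟨f, hf, rfl⟩

/-- if the penalized least squares estimator `f̂` is the unique
minimizer of `‖Y - f‖ₙ² + λ² I(f)²`, then `τ(f̂) = R*`, the maximizer of `H_n`. -/
theorem tau_fhat_eq_Rstar (n : ℕ) (hn : 0 < n) (I : Seminorm ℝ (Fin n → ℝ)) (lam : ℝ)
    (hlam : 0 < lam) (f0 eps : Fin n → ℝ) (Y : Fin n → ℝ) (hY : Y = f0 + eps)
    (Rmin : ℝ) (hRmin : ∀ f : Fin n → ℝ, Rmin ≤ tauF n I lam f0 f)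
    (Rstar : ℝ) (hRstarMem : Rstar ∈ Set.Ici Rmin)
    (hRstarMax : IsMaxOn (fun R => Hn n I lam f0 eps R) (Set.Ici Rmin) Rstar)
    (hRstarUniq : ∀ R ∈ Set.Ici Rmin,
      IsMaxOn (fun R' => Hn n I lam f0 eps R') (Set.Ici Rmin) R → R = Rstar)
    (hattain : ∃ fstar : Fin n → ℝ, tauF n I lam f0 fstar ≤ Rstar ∧
      innerN n eps (fstar - f0) / n = Mn n I lam f0 eps Rstar)
    (fhat : Fin n → ℝ)
    (hfhatMin : ∀ f : Fin n → ℝ,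
      (normN n (Y - fhat)) ^ 2 + lam ^ 2 * (I fhat) ^ 2 ≤
        (normN n (Y - f)) ^ 2 + lam ^ 2 * (I f) ^ 2)
    (hfhatUniq : ∀ g : Fin n → ℝ,
      (∀ f : Fin n → ℝ, (normN n (Y - g)) ^ 2 + lam ^ 2 * (I g) ^ 2 ≤
        (normN n (Y - f)) ^ 2 + lam ^ 2 * (I f) ^ 2) → g = fhat) :
    tauF n I lam f0 fhat = Rstar := by
  obtain ⟨fstar, hτ, hM⟩ := hattain
  set T := tauF n I lam f0 fstar with hT
  -- Step A: T = Rstar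
  have hTmem : T ∈ Set.Ici Rmin := hRmin fstar
  have hMnT : innerN n eps (fstar - f0) / n ≤ Mn n I lam f0 eps T :=
    mem_MnSet n I lam f0 eps fstar T le_rfl
  have hmaxT : Hn n I lam f0 eps T ≤ Hn n I lam f0 eps Rstar := hRstarMax hTmem
  have hT0 : 0 ≤ T := tauF_nonneg n I lam f0 fstar
  have hTR : T = Rstar := by
    have h1 : Mn n I lam f0 eps Rstar - T^2/2 ≤ Mn n I lam f0 eps Rstar - Rstar^2/2 := by
      have := hmaxT
      simp only [Hn] at this
      nlinarith [hMnT, hM]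
    nlinarith
  -- Step B: fstar is a minimizer
  have hmin : ∀ f : Fin n → ℝ,
      (normN n (Y - fstar)) ^ 2 + lam ^ 2 * (I fstar) ^ 2 ≤
        (normN n (Y - f)) ^ 2 + lam ^ 2 * (I f) ^ 2 := by
    intro f
    rw [hY, obj_eq n I lam f0 eps fstar, obj_eq n I lam f0 eps f]
    have hf1 : innerN n eps (f - f0) / n ≤ Mn n I lam f0 eps (tauF n I lam f0 f) :=
      mem_MnSet n I lam f0 eps f _ le_rfl
    have hf2 : Hn n I lam f0 eps (tauF n I lam f0 f) ≤ Hn n I lam f0 eps Rstar :=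
      hRstarMax (hRmin f)
    simp only [Hn] at hf2
    rw [← hT, hTR] at *
    nlinarith [hM, hf1, hf2]
  have := hfhatUniq fstar hmin
  rw [← this, ← hT, hTR]
end

section
/- Let H : [R_min, ∞) → ℝ be strictly concave with maximizer R₀, and suppose −(R−K₁)²/2 + K₁²/2 < H(R) < −(R−K₂)²/2 + K₂²/2 for all R ≥ R_min, where 0 < K₁ ≤ K₂. If R_min ≤ K₁, then R_min ≤ R₀ ≤ 2K₂. -/
open Set

/-- bounding the maximizer `R₀`. Let `H` be strictly concave on
`[R_min, ∞)` with maximizer `R₀` there, and suppose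
`-(R-K₁)²/2 + K₁²/2 < H(R) < -(R-K₂)²/2 + K₂²/2` for all `R ≥ R_min`, where
`0 < K₁ ≤ K₂`. If `R_min ≤ K₁`, then `R_min ≤ R₀ ≤ 2K₂`. -/
theorem R0_bounds (Rmin : ℝ) (H : ℝ → ℝ)
    (hconc : StrictConcaveOn ℝ (Set.Ici Rmin) H)
    (R0 : ℝ) (hR0Mem : R0 ∈ Set.Ici Rmin) (hR0Max : IsMaxOn H (Set.Ici Rmin) R0)
    (K1 K2 : ℝ) (hK1 : 0 < K1) (hK12 : K1 ≤ K2)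
    (hbounds : ∀ R, Rmin ≤ R →
      -(R - K1) ^ 2 / 2 + K1 ^ 2 / 2 < H R ∧ H R < -(R - K2) ^ 2 / 2 + K2 ^ 2 / 2)
    (hRminK1 : Rmin ≤ K1) :
    Rmin ≤ R0 ∧ R0 ≤ 2 * K2 := by
  refine ⟨hR0Mem, ?_⟩
  by_contra h
  push_neg at h
  have hK1pos : 0 < H K1 := by
    have := (hbounds K1 hRminK1).1
    nlinarith
  have hle : H K1 ≤ H R0 := hR0Max hRminK1
  have hneg : H R0 < 0 := by
    have := (hbounds R0 hR0Mem).2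
    nlinarith [hK1.trans_le hK12]
  linarith
end
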